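/- For x > 0, ψ(x) + 1/x - ln(x) > 1/(2x) - 1/(12x²) + 1/(120x⁴) - 1/(252x⁶), where ψ is the digamma function. -/

import Mathlib

open Real Filter Topology Set

noncomputable def digamma (x : ℝ) : ℝ := deriv Real.Gamma x / Real.Gamma x

noncomputable def trigamma (x : ℝ) : ℝ := deriv digamma x

/-!
Write `P(x) = 1/(2x) + 1/(12x²) - 1/(120x⁴) + 1/(252x⁶)` and `R(x) = ψ(x) - log x + P(x)`; the
claim is `0 < R(x)`. By `ψ(x + 1) = ψ(x) + 1/x`, the drop `D(x) = R(x) - R(x + 1)` is the elementary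
function `log (1 + 1/x) - 1/x + P(x) - P(x + 1)`, whose derivative is an explicitly negative rational
function; as `D → 0` at infinity, `D > 0`. So `R` strictly decreases along `x + ℕ`, while `R → 0`
at infinity because convexity of `log Γ` squeezes `ψ(x)` between `log x - 1/x` and `log x`.
-/

theorem StrictAnti.lt_of_tendsto {α β : Type*} [TopologicalSpace α] [Preorder α]
    [OrderClosedTopology α] [PartialOrder β] [IsDirectedOrder β] [NoMaxOrder β] {f : β → α}
    {a : α} (hf : StrictAnti f) (ha : Tendsto f atTop (𝓝 a)) (b : β) : a < f b :=
  let ⟨_, hbc⟩ := exists_gt b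
  (hf.antitone.le_of_tendsto ha _).trans_lt (hf hbc)

theorem lt_of_tendsto_of_forall_add_one_lt {f : ℝ → ℝ} {a x : ℝ}
    (hf : ∀ y, x ≤ y → f (y + 1) < f y) (ha : Tendsto f atTop (𝓝 a)) : a < f x := by
  have hanti : StrictAnti fun n : ℕ => f (x + n) := strictAnti_nat_of_succ_lt fun n => by
    simpa [add_assoc] using hf (x + n) (by simp)
  have hlim : Tendsto (fun n : ℕ => f (x + n)) atTop (𝓝 a) :=
    ha.comp (tendsto_atTop_add_const_left atTop x tendsto_natCast_atTop_atTop)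
  simpa using hanti.lt_of_tendsto hlim 0

theorem tendsto_one_div_mul_pow_atTop (c : ℝ) {n : ℕ} (hn : n ≠ 0) :
    Tendsto (fun t : ℝ => 1 / (c * t ^ n)) atTop (𝓝 0) := by
  simpa [mul_inv, mul_comm] using ((tendsto_pow_atTop hn).inv_tendsto_atTop).const_mul c⁻¹

theorem hasDerivAt_one_div_mul_pow (c : ℝ) (n : ℕ) {t : ℝ} (ht : t ≠ 0) :
    HasDerivAt (fun y : ℝ => 1 / (c * y ^ n)) (-n / (c * t ^ (n + 1))) t := by
  have h : HasDerivAt (fun y : ℝ => c⁻¹ * (y ^ n)⁻¹) _ t :=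
    ((hasDerivAt_pow n t).inv (pow_ne_zero n ht)).const_mul c⁻¹
  simp only [one_div, mul_inv]
  refine h.congr_deriv ?_
  rcases eq_or_ne c 0 with rfl | hc
  · simp
  rcases n with _ | n
  · simp
  · simp only [Nat.add_sub_cancel]
    field_simp
    ring

noncomputable def digammaCorr (t : ℝ) : ℝ :=
  1 / (2 * t) + 1 / (12 * t ^ 2) - 1 / (120 * t ^ 4) + 1 / (252 * t ^ 6)

noncomputable def digammaRem (x : ℝ) : ℝ := digamma x - log x + digammaCorr x

noncomputable def digammaRemDrop (t : ℝ) : ℝ :=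
  log (t + 1) - log t - t⁻¹ + digammaCorr t - digammaCorr (t + 1)

theorem tendsto_digammaCorr_atTop : Tendsto digammaCorr atTop (𝓝 0) := by
  have h1 : Tendsto (fun t : ℝ => 1 / (2 * t)) atTop (𝓝 0) := by
    simpa using tendsto_one_div_mul_pow_atTop 2 one_ne_zero
  rw [show (0 : ℝ) = 0 + 0 - 0 + 0 by norm_num]
  exact ((h1.add (tendsto_one_div_mul_pow_atTop 12 two_ne_zero)).sub
    (tendsto_one_div_mul_pow_atTop 120 four_ne_zero)).add
    (tendsto_one_div_mul_pow_atTop 252 (by norm_num))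

theorem hasDerivAt_digammaCorr {t : ℝ} (ht : t ≠ 0) :
    HasDerivAt digammaCorr
      (-1 / (2 * t ^ 2) - 1 / (6 * t ^ 3) + 1 / (30 * t ^ 5) - 1 / (42 * t ^ 7)) t := by
  have h1 : HasDerivAt (fun y : ℝ => 1 / (2 * y)) (-1 / (2 * t ^ 2)) t := by
    simpa using hasDerivAt_one_div_mul_pow 2 1 ht
  have h := ((h1.add (hasDerivAt_one_div_mul_pow 12 2 ht)).sub
    (hasDerivAt_one_div_mul_pow 120 4 ht)).add (hasDerivAt_one_div_mul_pow 252 6 ht)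
  exact h.congr_deriv (by push_cast; ring)

theorem hasDerivAt_digammaRemDrop {t : ℝ} (ht : 0 < t) :
    HasDerivAt digammaRemDrop
      (-(63 * t ^ 4 + 126 * t ^ 3 + 98 * t ^ 2 + 35 * t + 5) / (210 * t ^ 7 * (t + 1) ^ 7)) t := by
  have ht1 : t + 1 ≠ 0 := by positivity
  have h := (((((hasDerivAt_log ht1).comp_add_const t 1).sub (hasDerivAt_log ht.ne')).sub
    (hasDerivAt_inv ht.ne')).add (hasDerivAt_digammaCorr ht.ne')).sub
    ((hasDerivAt_digammaCorr ht1).comp_add_const t 1)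
  refine h.congr_deriv ?_
  field_simp
  ring

theorem digammaRemDrop_strictAntiOn : StrictAntiOn digammaRemDrop (Ioi 0) := by
  refine strictAntiOn_of_deriv_neg (convex_Ioi 0)
    (fun t ht => (hasDerivAt_digammaRemDrop ht).continuousAt.continuousWithinAt) fun t ht => ?_
  rw [interior_Ioi, mem_Ioi] at ht
  rw [(hasDerivAt_digammaRemDrop ht).deriv]
  exact div_neg_of_neg_of_pos (neg_neg_of_pos (by positivity)) (by positivity)

theorem tendsto_digammaRemDrop_atTop : Tendsto digammaRemDrop atTop (𝓝 0) := by
  have h := (((tendsto_log_comp_add_sub_log 1).sub tendsto_inv_atTop_zero).add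
    tendsto_digammaCorr_atTop).sub
    (tendsto_digammaCorr_atTop.comp (tendsto_atTop_add_const_right atTop 1 tendsto_id))
  rw [show (0 : ℝ) = 0 - 0 + 0 - 0 by norm_num]
  exact h

theorem digammaRemDrop_pos {t : ℝ} (ht : 0 < t) : 0 < digammaRemDrop t :=
  lt_of_tendsto_of_forall_add_one_lt (fun y hy => digammaRemDrop_strictAntiOn
    (ht.trans_le hy) (show 0 < y + 1 by linarith) (lt_add_one y)) tendsto_digammaRemDrop_atTop

theorem ne_neg_natCast_of_pos {x : ℝ} (hx : 0 < x) (m : ℕ) : x ≠ -m :=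
  ((neg_nonpos.2 m.cast_nonneg).trans_lt hx).ne'

theorem hasDerivAt_log_Gamma {x : ℝ} (hx : ∀ m : ℕ, x ≠ -m) :
    HasDerivAt (log ∘ Gamma) (digamma x) x :=
  (differentiableAt_Gamma hx).hasDerivAt.log (Gamma_ne_zero hx)

theorem log_Gamma_add_one {x : ℝ} (hx : ∀ m : ℕ, x ≠ -m) :
    log (Gamma (x + 1)) = log x + log (Gamma x) := by
  have hx0 : x ≠ 0 := by simpa using hx 0
  rw [Gamma_add_one hx0, log_mul hx0 (Gamma_ne_zero hx)]

theorem digamma_add_one {x : ℝ} (hx : ∀ m : ℕ, x ≠ -m) :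
    digamma (x + 1) = digamma x + x⁻¹ := by
  have hx0 : x ≠ 0 := by simpa using hx 0
  have hx1 : ∀ m : ℕ, x + 1 ≠ -m := fun m h => hx (m + 1) (by push_cast; linarith)
  have hshift := (hasDerivAt_log_Gamma hx1).comp_add_const x 1
  have hsum := (hasDerivAt_log hx0).add (hasDerivAt_log_Gamma hx)
  have heq : (fun y => (log ∘ Gamma) (y + 1)) =ᶠ[𝓝 x] fun y => log y + (log ∘ Gamma) y := by
    filter_upwards [eventually_ne_nhds hx0,
      (differentiableAt_Gamma hx).continuousAt.eventually_ne (Gamma_ne_zero hx)] with y hy hΓ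
    simp only [Function.comp_apply]
    rw [Gamma_add_one hy, log_mul hy hΓ]
  rw [(hshift.congr_of_eventuallyEq heq.symm).unique hsum, add_comm]

theorem slope_log_Gamma_add_one {x : ℝ} (hx : 0 < x) : slope (log ∘ Gamma) x (x + 1) = log x := by
  rw [slope_def_field, add_sub_cancel_left, div_one, Function.comp_apply, Function.comp_apply,
    log_Gamma_add_one (ne_neg_natCast_of_pos hx), add_sub_cancel_right]

theorem digamma_le_log {x : ℝ} (hx : 0 < x) : digamma x ≤ log x := by
  rw [← (hasDerivAt_log_Gamma (ne_neg_natCast_of_pos hx)).deriv, ← slope_log_Gamma_add_one hx]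
  exact convexOn_log_Gamma.deriv_le_slope hx (show 0 < x + 1 by linarith) (lt_add_one x)
    (hasDerivAt_log_Gamma (ne_neg_natCast_of_pos hx)).differentiableAt

theorem log_sub_inv_le_digamma {x : ℝ} (hx : 0 < x) : log x - x⁻¹ ≤ digamma x := by
  have hx1 : 0 < x + 1 := by linarith
  have h := convexOn_log_Gamma.slope_le_deriv hx hx1 (lt_add_one x)
    (hasDerivAt_log_Gamma (ne_neg_natCast_of_pos hx1)).differentiableAt
  rw [slope_log_Gamma_add_one hx, (hasDerivAt_log_Gamma (ne_neg_natCast_of_pos hx1)).deriv,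
    digamma_add_one (ne_neg_natCast_of_pos hx)] at h
  linarith

theorem digammaRem_sub_digammaRem_add_one {x : ℝ} (hx : ∀ m : ℕ, x ≠ -m) :
    digammaRem x - digammaRem (x + 1) = digammaRemDrop x := by
  rw [digammaRem, digammaRem, digammaRemDrop, digamma_add_one hx]
  ring

theorem tendsto_digammaRem_atTop : Tendsto digammaRem atTop (𝓝 0) := by
  have hlower : Tendsto (fun x => digammaCorr x - x⁻¹) atTop (𝓝 0) := by
    simpa using tendsto_digammaCorr_atTop.sub tendsto_inv_atTop_zero
  refine tendsto_of_tendsto_of_tendsto_of_le_of_le' hlower tendsto_digammaCorr_atTop ?_ ?_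
  · filter_upwards [eventually_gt_atTop 0] with x hx
    rw [digammaRem]
    linarith [log_sub_inv_le_digamma hx]
  · filter_upwards [eventually_gt_atTop 0] with x hx
    rw [digammaRem]
    linarith [digamma_le_log hx]

theorem digamma_lower (x : ℝ) (hx : 0 < x) :
    1 / (2 * x) - 1 / (12 * x ^ 2) + 1 / (120 * x ^ 4) - 1 / (252 * x ^ 6) <
      digamma x + 1 / x - Real.log x := by
  have hrem : 0 < digammaRem x := by
    refine lt_of_tendsto_of_forall_add_one_lt (fun y hy => ?_) tendsto_digammaRem_atTop
    have hy0 : 0 < y := hx.trans_le hy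
    have hdrop := digammaRem_sub_digammaRem_add_one (ne_neg_natCast_of_pos hy0)
    linarith [digammaRemDrop_pos hy0]
  have hhalf : 1 / x - 1 / (2 * x) = 1 / (2 * x) := by field_simp; ring
  rw [digammaRem, digammaCorr] at hrem
  linarith
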